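/- arXiv:1901.02933 — 3 statements merged into one kernel-verified Lean document; each statement's English description precedes it below -/
import Mathlib

section
/- Let G = (V, E) be a finite undirected graph and let λ̂ be in the matching polytope of G. Let G̃ and λ̃ be the doubled graph and weights as constructed (two copies of G joined by edges (v, v') of weight 1 - λ̂(δ_G(v)), copies of edges keeping their weights). Then for every subset S ⊆ V(G̃) with |S| odd, λ̃(δ_{G̃}(S)) ≥ 1; i.e., λ̃ lies in the perfect matching polytope of G̃. -/
open Finset

/-- Edges of `E` incident to vertex `v` (the set `δ(v)`). -/
def edgesInc {V : Type*} [Fintype V] [DecidableEq V] (E : Finset (Sym2 V)) (v : V) :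
    Finset (Sym2 V) :=
  E.filter (fun e => v ∈ e)

/-- Edges of `E` with exactly one endpoint in `S` (the cut-set `δ(S)`). -/
def edgesCut {V : Type*} [Fintype V] [DecidableEq V] (E : Finset (Sym2 V)) (S : Finset V) :
    Finset (Sym2 V) :=
  E.filter (fun e => ∃ a b : V, e = s(a, b) ∧ a ∈ S ∧ b ∉ S)

/-- Edges of `E` with both endpoints in `S` (the set `E(S)`). -/
def edgesIn {V : Type*} [Fintype V] [DecidableEq V] (E : Finset (Sym2 V)) (S : Finset V) :
    Finset (Sym2 V) :=
  E.filter (fun e => ∀ a ∈ e, a ∈ S)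

/-- Total weight of a finite set of edges. -/
def wSum {V : Type*} (w : Sym2 V → ℝ) (F : Finset (Sym2 V)) : ℝ :=
  ∑ e ∈ F, w e

/-- The doubled graph `G̃`: two copies of the edge set of `G` plus an edge `(v, v')`
joining each vertex to its copy. -/
def doubledEdges {V : Type*} [Fintype V] [DecidableEq V] (E : Finset (Sym2 V)) :
    Finset (Sym2 (V ⊕ V)) :=
  E.image (Sym2.map Sum.inl) ∪ E.image (Sym2.map Sum.inr) ∪
    Finset.univ.image (fun v : V => s(Sum.inl v, Sum.inr v))

/-!
Write `A` and `B` for the two halves of `S`. The cut of `S` in `G̃` consists of `δ(A)` and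
`δ(B)` in the two copies and the rungs `(v, v')` with `v ∈ A ∆ B`, so
`λ̃(δ(S)) = λ̂(δ(A)) + λ̂(δ(B)) + |A ∆ B| - ∑_{v ∈ A ∆ B} λ̂(δ(v))`.
Counting edge by edge,
`∑_{v ∈ A ∆ B} λ̂(δ(v)) ≤ 2 λ̂(E(A \ B)) + 2 λ̂(E(B \ A)) + λ̂(δ(A)) + λ̂(δ(B))`,
so the cut weighs at least `|A \ B| + |B \ A| - 2 λ̂(E(A \ B)) - 2 λ̂(E(B \ A))`.
As `|A| + |B| = |S|` is odd, one of `A \ B`, `B \ A` has odd size: the odd-set constraint bounds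
its term by `|·| - 1`, and the degree constraints bound the other one by `|·|`.
-/

open scoped symmDiff

lemma exists_mk_eq_mem_notMem_iff {α : Type*} {S : Finset α} {a b : α} :
    (∃ x y : α, s(a, b) = s(x, y) ∧ x ∈ S ∧ y ∉ S) ↔ (a ∈ S ↔ b ∉ S) := by
  simp only [Sym2.eq_iff]
  constructor
  · rintro ⟨x, y, ⟨rfl, rfl⟩ | ⟨rfl, rfl⟩, hx, hy⟩ <;> tauto
  · intro h
    by_cases ha : a ∈ S
    · exact ⟨a, b, .inl ⟨rfl, rfl⟩, ha, h.1 ha⟩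
    · exact ⟨b, a, .inr ⟨rfl, rfl⟩, not_not.1 (mt h.2 ha), ha⟩

lemma wSum_union {α : Type*} [DecidableEq α] (w : Sym2 α → ℝ) {F G : Finset (Sym2 α)}
    (h : Disjoint F G) : wSum w (F ∪ G) = wSum w F + wSum w G :=
  sum_union h

lemma wSum_image_map {α β : Type*} [DecidableEq β] {f : α → β} (hf : Function.Injective f)
    {w : Sym2 α → ℝ} {w' : Sym2 β → ℝ} {F : Finset (Sym2 α)}
    (h : ∀ e ∈ F, w' (Sym2.map f e) = w e) :
    wSum w' (F.image (Sym2.map f)) = wSum w F := by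
  rw [wSum, wSum, sum_image fun _ _ _ _ h => Sym2.map.injective hf h]
  exact sum_congr rfl h

section Parity

variable {α : Type*} [DecidableEq α]

lemma card_symmDiff (A B : Finset α) : #(A ∆ B) = #(A \ B) + #(B \ A) := by
  rw [Finset.symmDiff_def, card_union_of_disjoint disjoint_sdiff_sdiff]

lemma odd_card_symmDiff {A B : Finset α} (h : Odd (#A + #B)) : Odd #(A ∆ B) := by
  have hA := card_sdiff_add_card_inter A B
  have hB := card_sdiff_add_card_inter B A
  rw [inter_comm] at hB
  obtain ⟨k, hk⟩ := h
  exact ⟨k - #(A ∩ B), by rw [card_symmDiff]; omega⟩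

end Parity

section Cut

variable {α : Type*} [Fintype α] [DecidableEq α]

lemma edgesCut_subset (E : Finset (Sym2 α)) (S : Finset α) : edgesCut E S ⊆ E :=
  filter_subset _ _

lemma edgesCut_union (E F : Finset (Sym2 α)) (S : Finset α) :
    edgesCut (E ∪ F) S = edgesCut E S ∪ edgesCut F S :=
  filter_union _ _ _

lemma edgesCut_image_map {β : Type*} [Fintype β] [DecidableEq β] (f : α → β)
    (E : Finset (Sym2 α)) {S : Finset β} {S' : Finset α} (hS : ∀ v, v ∈ S' ↔ f v ∈ S) :
    edgesCut (E.image (Sym2.map f)) S = (edgesCut E S').image (Sym2.map f) := by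
  rw [edgesCut, edgesCut, filter_image]
  congr 1
  refine filter_congr fun e _ => ?_
  induction e using Sym2.ind with
  | _ a b => rw [Sym2.map_mk, exists_mk_eq_mem_notMem_iff, exists_mk_eq_mem_notMem_iff, hS, hS]

end Cut

section Doubled

variable {V : Type*} [DecidableEq V]

lemma disjoint_image_map_inl_inr (F G : Finset (Sym2 V)) :
    Disjoint (F.image (Sym2.map Sum.inl)) (G.image (Sym2.map Sum.inr)) := by
  simp only [disjoint_left, mem_image, not_exists, not_and]
  rintro _ ⟨e, -, rfl⟩ e' -
  induction e using Sym2.ind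
  induction e' using Sym2.ind
  simp

lemma disjoint_image_map_image_inl_inr (F G : Finset (Sym2 V)) (X : Finset V) :
    Disjoint (F.image (Sym2.map Sum.inl) ∪ G.image (Sym2.map Sum.inr))
      (X.image fun v => s(Sum.inl v, Sum.inr v)) := by
  simp only [disjoint_left, mem_image, mem_union, not_exists, not_and]
  rintro _ (⟨e, -, rfl⟩ | ⟨e, -, rfl⟩) v - <;> induction e using Sym2.ind <;> simp

variable [Fintype V]

lemma edgesCut_image_inl_inr (S : Finset (V ⊕ V)) :
    edgesCut (univ.image fun v : V => s(Sum.inl v, Sum.inr v)) S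
      = (S.toLeft ∆ S.toRight).image fun v => s(Sum.inl v, Sum.inr v) := by
  rw [edgesCut, filter_image]
  congr 1
  ext v
  simp only [mem_filter, mem_univ, true_and, exists_mk_eq_mem_notMem_iff, mem_symmDiff,
    mem_toLeft, mem_toRight]
  tauto

lemma edgesCut_doubledEdges (E : Finset (Sym2 V)) (S : Finset (V ⊕ V)) :
    edgesCut (doubledEdges E) S
      = (edgesCut E S.toLeft).image (Sym2.map Sum.inl)
        ∪ (edgesCut E S.toRight).image (Sym2.map Sum.inr)
        ∪ (S.toLeft ∆ S.toRight).image fun v => s(Sum.inl v, Sum.inr v) := by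
  rw [doubledEdges, edgesCut_union, edgesCut_union, edgesCut_image_inl_inr,
    edgesCut_image_map _ _ fun _ => mem_toLeft, edgesCut_image_map _ _ fun _ => mem_toRight]

lemma wSum_edgesCut_doubledEdges {E : Finset (Sym2 V)} {w : Sym2 V → ℝ}
    {wt : Sym2 (V ⊕ V) → ℝ}
    (hcopy₁ : ∀ a b : V, s(a, b) ∈ E → wt s(Sum.inl a, Sum.inl b) = w s(a, b))
    (hcopy₂ : ∀ a b : V, s(a, b) ∈ E → wt s(Sum.inr a, Sum.inr b) = w s(a, b))
    (S : Finset (V ⊕ V)) :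
    wSum wt (edgesCut (doubledEdges E) S)
      = wSum w (edgesCut E S.toLeft) + wSum w (edgesCut E S.toRight)
        + ∑ v ∈ S.toLeft ∆ S.toRight, wt s(Sum.inl v, Sum.inr v) := by
  have hinj : Function.Injective fun v : V => s(Sum.inl v, Sum.inr v) := fun v v' h => by
    simpa using h
  have hpair : wSum wt ((S.toLeft ∆ S.toRight).image fun v => s(Sum.inl v, Sum.inr v))
      = ∑ v ∈ S.toLeft ∆ S.toRight, wt s(Sum.inl v, Sum.inr v) :=
    sum_image hinj.injOn
  rw [edgesCut_doubledEdges, wSum_union _ (disjoint_image_map_image_inl_inr _ _ _),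
    wSum_union _ (disjoint_image_map_inl_inr _ _), hpair,
    wSum_image_map (w := w) Sum.inl_injective, wSum_image_map (w := w) Sum.inr_injective]
  · intro e he
    induction e using Sym2.ind with
    | _ a b => exact hcopy₂ a b (edgesCut_subset _ _ he)
  · intro e he
    induction e using Sym2.ind with
    | _ a b => exact hcopy₁ a b (edgesCut_subset _ _ he)

end Doubled

section Incidence

variable {V : Type*} [DecidableEq V]

lemma card_filter_mem_mk_le (X : Finset V) (x y : V) :
    #{v ∈ X | v ∈ s(x, y)} ≤ (if x ∈ X then 1 else 0) + (if y ∈ X then 1 else 0) := by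
  have : {v ∈ X | v ∈ s(x, y)} = {v ∈ X | v = x} ∪ {v ∈ X | v = y} := by
    ext; simp [and_or_left]
  rw [this, filter_eq', filter_eq']
  refine (card_union_le _ _).trans ?_
  split_ifs <;> simp

lemma card_filter_mem_of_forall_mem {X : Finset V} {e : Sym2 V} (he : ∀ a ∈ e, a ∈ X)
    (hdiag : ¬ e.IsDiag) : #{v ∈ X | v ∈ e} = 2 := by
  rw [← Sym2.card_toFinset_of_not_isDiag e hdiag]
  congr 1
  ext v
  simp only [mem_filter, Sym2.mem_toFinset, and_iff_right_iff_imp]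
  exact he v

variable [Fintype V] {E : Finset (Sym2 V)} {w : Sym2 V → ℝ}

lemma sum_wSum_edgesInc (X : Finset V) :
    ∑ v ∈ X, wSum w (edgesInc E v) = ∑ e ∈ E, (#{v ∈ X | v ∈ e} : ℝ) * w e := by
  simp only [wSum, edgesInc, sum_filter]
  rw [sum_comm]
  refine sum_congr rfl fun e _ => ?_
  rw [← sum_filter, sum_const, nsmul_eq_mul]

lemma two_mul_wSum_edgesIn_le_sum (hsimple : ∀ e ∈ E, ¬ e.IsDiag)
    (hnonneg : ∀ e ∈ E, 0 ≤ w e) (X : Finset V) :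
    2 * wSum w (edgesIn E X) ≤ ∑ v ∈ X, wSum w (edgesInc E v) := by
  rw [sum_wSum_edgesInc, wSum, edgesIn, sum_filter, mul_sum]
  refine sum_le_sum fun e he => ?_
  split_ifs with hX
  · rw [card_filter_mem_of_forall_mem hX (hsimple e he)]
    norm_num
  · rw [mul_zero]
    exact mul_nonneg (Nat.cast_nonneg _) (hnonneg e he)

lemma sum_wSum_edgesInc_symmDiff_le (hnonneg : ∀ e ∈ E, 0 ≤ w e) (A B : Finset V) :
    ∑ v ∈ A ∆ B, wSum w (edgesInc E v)
      ≤ 2 * wSum w (edgesIn E (A \ B)) + 2 * wSum w (edgesIn E (B \ A))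
        + wSum w (edgesCut E A) + wSum w (edgesCut E B) := by
  rw [sum_wSum_edgesInc]
  simp only [wSum, edgesIn, edgesCut, sum_filter, mul_sum, ← sum_add_distrib]
  refine sum_le_sum fun e he => ?_
  induction e using Sym2.ind with
  | _ x y =>
    have hw := hnonneg _ he
    have hcount : (#{v ∈ A ∆ B | v ∈ s(x, y)} : ℝ)
        ≤ (if x ∈ A ∆ B then 1 else 0) + (if y ∈ A ∆ B then 1 else 0) :=
      mod_cast card_filter_mem_mk_le _ x y
    refine (mul_le_mul_of_nonneg_right hcount hw).trans ?_
    simp only [exists_mk_eq_mem_notMem_iff, Sym2.mem_iff, forall_eq_or_imp, forall_eq,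
      mem_symmDiff, mem_sdiff]
    by_cases hxA : x ∈ A <;> by_cases hxB : x ∈ B <;> by_cases hyA : y ∈ A <;>
      by_cases hyB : y ∈ B <;> simp [hxA, hxB, hyA, hyB] <;> linarith

lemma two_mul_wSum_edgesIn_le_card (hsimple : ∀ e ∈ E, ¬ e.IsDiag)
    (hnonneg : ∀ e ∈ E, 0 ≤ w e) (hdeg : ∀ v : V, wSum w (edgesInc E v) ≤ 1) (X : Finset V) :
    2 * wSum w (edgesIn E X) ≤ #X :=
  calc 2 * wSum w (edgesIn E X) ≤ ∑ v ∈ X, wSum w (edgesInc E v) :=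
        two_mul_wSum_edgesIn_le_sum hsimple hnonneg X
    _ ≤ ∑ _v ∈ X, (1 : ℝ) := sum_le_sum fun v _ => hdeg v
    _ = #X := by simp

lemma two_mul_wSum_edgesIn_add_le (hsimple : ∀ e ∈ E, ¬ e.IsDiag)
    (hnonneg : ∀ e ∈ E, 0 ≤ w e) (hdeg : ∀ v : V, wSum w (edgesInc E v) ≤ 1)
    (hodd : ∀ S : Finset V, Odd #S → wSum w (edgesIn E S) ≤ ((#S : ℝ) - 1) / 2)
    {P Q : Finset V} (hPQ : Odd (#P + #Q)) :
    2 * (wSum w (edgesIn E P) + wSum w (edgesIn E Q)) ≤ #P + #Q - 1 := by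
  rcases Nat.even_or_odd #P with hP | hP
  · have := hodd Q ((Nat.odd_add'.1 hPQ).2 hP)
    have := two_mul_wSum_edgesIn_le_card hsimple hnonneg hdeg P
    linarith
  · have := hodd P hP
    have := two_mul_wSum_edgesIn_le_card hsimple hnonneg hdeg Q
    linarith

end Incidence

theorem stmt8 {V : Type*} [Fintype V] [DecidableEq V] (E : Finset (Sym2 V)) (w : Sym2 V → ℝ)
    (hsimple : ∀ e ∈ E, ¬ e.IsDiag)
    (hnonneg : ∀ e ∈ E, 0 ≤ w e)
    (hdeg : ∀ v : V, wSum w (edgesInc E v) ≤ 1)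
    (hodd : ∀ S : Finset V, Odd S.card → wSum w (edgesIn E S) ≤ ((S.card : ℝ) - 1) / 2)
    (wt : Sym2 (V ⊕ V) → ℝ)
    (hcopy₁ : ∀ a b : V, s(a, b) ∈ E → wt s(Sum.inl a, Sum.inl b) = w s(a, b))
    (hcopy₂ : ∀ a b : V, s(a, b) ∈ E → wt s(Sum.inr a, Sum.inr b) = w s(a, b))
    (hpair : ∀ v : V, wt s(Sum.inl v, Sum.inr v) = 1 - wSum w (edgesInc E v)) :
    ∀ S : Finset (V ⊕ V), Odd S.card → 1 ≤ wSum wt (edgesCut (doubledEdges E) S) := by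
  intro S hS
  set A := S.toLeft
  set B := S.toRight
  have hAB : Odd (#(A \ B) + #(B \ A)) :=
    card_symmDiff A B ▸ odd_card_symmDiff (card_toLeft_add_card_toRight ▸ hS)
  have hcut := sum_wSum_edgesInc_symmDiff_le hnonneg A B
  have hin := two_mul_wSum_edgesIn_add_le hsimple hnonneg hdeg hodd hAB
  rw [wSum_edgesCut_doubledEdges hcopy₁ hcopy₂, sum_congr rfl fun v _ => hpair v,
    sum_sub_distrib, sum_const, nsmul_one, card_symmDiff]
  push_cast
  linarith
end

section
/- Let T be a finite tree with an even number of vertices, and let U be a vertex subset of odd cardinality. Then there exists an edge f of T such that one of the two components of T \ f has odd cardinality and f lies in the cut-set δ_T(U). -/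
open Finset

/-!
For an edge `vu` of `T`, let `branch v u` be the vertex set of the component of `T \ vu`
containing `u`. The branches at a vertex `v` partition `V \ {v}`, which has odd size, so an odd
number of them are odd. Hence in the graph `F` of edges of `T` whose two sides are odd, every
vertex has odd degree. If no edge of `F` left `U`, the subgraph of `F` induced on `U` would
have `|U|` vertices of odd degree, an odd number, against the handshake lemma. An edge of `F`
leaving `U` is the required `f`, with its odd side as `Wf`.
-/

namespace SimpleGraph

variable {V : Type*} {G : SimpleGraph V}

theorem exists_adj_notMem_of_odd_degree [Fintype V] [DecidableRel G.Adj] {U : Finset V}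
    (hU : Odd #U) (hdeg : ∀ v ∈ U, Odd (G.degree v)) : ∃ v ∈ U, ∃ u ∉ U, G.Adj v u := by
  classical
  by_contra! hclosed
  have hodd (w : (U : Set V)) : Odd ((G.induce (U : Set V)).degree w) := by
    convert hdeg w w.2 using 1
    convert degree_induce_of_neighborSet_subset fun u hu => by_contra (hclosed w w.2 u · hu)
  have hhandshake := (G.induce (U : Set V)).even_card_odd_degree_vertices
  simp only [SetLike.coe_sort_coe, hodd, filter_true, univ_eq_attach, card_attach] at hhandshake
  exact Nat.not_even_iff_odd.mpr hU hhandshake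

theorem IsAcyclic.mem_edges_of_adj (hG : G.IsAcyclic) {u v : V} (h : G.Adj u v)
    (p : G.Walk u v) : s(u, v) ∈ p.edges :=
  isBridge_iff_forall_walk_mem_edges.mp (isAcyclic_iff_forall_adj_isBridge.mp hG h) p

theorem Preconnected.reachable_deleteEdges_or (hG : G.Preconnected) (u v x : V) :
    (G.deleteEdges {s(u, v)}).Reachable u x ∨ (G.deleteEdges {s(u, v)}).Reachable v x := by
  have hux : Relation.ReflTransGen G.Adj u x := reachable_eq_reflTransGen ▸ hG u x
  induction hux with
  | refl => exact Or.inl .rfl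
  | @tail y z _ hyz ih =>
    by_cases he : s(y, z) = s(u, v)
    · rcases Sym2.eq_iff.mp he with ⟨-, rfl⟩ | ⟨-, rfl⟩
      · exact Or.inr .rfl
      · exact Or.inl .rfl
    · have hD : (G.deleteEdges {s(u, v)}).Adj y z := by simp [hyz, he]
      exact ih.imp (·.trans hD.reachable) (·.trans hD.reachable)

variable [Fintype V]

noncomputable def branch (G : SimpleGraph V) (v u : V) : Finset V := by
  classical exact {x | (G.deleteEdges {s(v, u)}).Reachable u x}

theorem mem_branch {v u x : V} :
    x ∈ G.branch v u ↔ (G.deleteEdges {s(v, u)}).Reachable u x := by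
  simp [branch]

theorem IsAcyclic.mem_branch_iff (hG : G.IsAcyclic) {v u x : V} (h : G.Adj v u) :
    x ∈ G.branch v u ↔ ∃ p : G.Walk u x, v ∉ p.support := by
  classical
  rw [mem_branch, reachable_deleteEdges_iff_exists_walk]
  constructor
  · rintro ⟨p, hp⟩
    refine ⟨p, fun hv => hp ?_⟩
    rw [Sym2.eq_swap]
    exact p.edges_takeUntil_subset_edges hv (hG.mem_edges_of_adj h.symm _)
  · rintro ⟨p, hp⟩
    exact ⟨p, fun he => hp (p.fst_mem_support_of_mem_edges he)⟩

theorem IsAcyclic.notMem_branch (hG : G.IsAcyclic) {v u : V} (h : G.Adj v u) :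
    v ∉ G.branch v u := fun hv => by
  obtain ⟨p, hp⟩ := (hG.mem_branch_iff h).mp hv
  exact hp p.end_mem_support

theorem IsAcyclic.edgesCut_branch [DecidableEq V] [DecidableRel G.Adj] (hG : G.IsAcyclic)
    {v u : V} (h : G.Adj v u) : edgesCut G.edgeFinset (G.branch v u) = {s(v, u)} := by
  ext e
  simp only [edgesCut, mem_filter, mem_singleton, mem_edgeFinset]
  constructor
  · rintro ⟨he, x, y, rfl, hx, hy⟩
    by_contra hne
    have hD : (G.deleteEdges {s(v, u)}).Adj x y := by simpa [hne] using he
    exact hy (mem_branch.mpr ((mem_branch.mp hx).trans hD.reachable))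
  · rintro rfl
    exact ⟨h, u, v, Sym2.eq_swap, mem_branch.mpr .rfl, hG.notMem_branch h⟩

theorem IsTree.compl_branch [DecidableEq V] (hG : G.IsTree) {v u : V} (h : G.Adj v u) :
    (G.branch v u)ᶜ = G.branch u v := by
  ext x
  rw [mem_compl, mem_branch, mem_branch, Sym2.eq_swap]
  refine ⟨(hG.connected.preconnected.reachable_deleteEdges_or u v x).resolve_left,
    fun hvx hux => ?_⟩
  have hbridge := isAcyclic_iff_forall_adj_isBridge.mp hG.isAcyclic h.symm
  exact isBridge_iff.mp hbridge (hux.trans hvx.symm)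

theorem IsAcyclic.disjoint_branch (hG : G.IsAcyclic) {v u₁ u₂ : V} (h₁ : G.Adj v u₁)
    (h₂ : G.Adj v u₂) (hne : u₁ ≠ u₂) : Disjoint (G.branch v u₁) (G.branch v u₂) := by
  refine Finset.disjoint_left.mpr fun x hx₁ hx₂ => ?_
  obtain ⟨p₁, hp₁⟩ := (hG.mem_branch_iff h₁).mp hx₁
  obtain ⟨p₂, hp₂⟩ := (hG.mem_branch_iff h₂).mp hx₂
  have hp := hG.mem_edges_of_adj h₁ (.cons h₂ (p₂.append p₁.reverse))
  simp only [Walk.edges_cons, List.mem_cons, Walk.edges_append, List.mem_append,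
    Walk.edges_reverse, List.mem_reverse] at hp
  rcases hp with he | he | he
  · exact hne (Sym2.congr_right.mp he)
  · exact hp₂ (p₂.fst_mem_support_of_mem_edges he)
  · exact hp₁ (p₁.fst_mem_support_of_mem_edges he)

theorem IsTree.biUnion_branch [DecidableEq V] [DecidableRel G.Adj] (hG : G.IsTree) (v : V) :
    (G.neighborFinset v).biUnion (G.branch v) = univ.erase v := by
  ext x
  simp only [mem_biUnion, mem_neighborFinset, mem_erase, mem_univ, and_true]
  constructor
  · rintro ⟨u, h, hx⟩ rfl
    exact hG.isAcyclic.notMem_branch h hx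
  · intro hx
    obtain ⟨p, hp⟩ := (hG.connected.preconnected v x).exists_isPath
    obtain ⟨u, h, q, rfl⟩ := Walk.exists_eq_cons_of_ne (Ne.symm hx) p
    have hvq : v ∉ q.support := ((Walk.cons_isPath_iff h q).mp hp).2
    exact ⟨u, h, (hG.isAcyclic.mem_branch_iff h).mpr ⟨q, hvq⟩⟩

theorem IsTree.sum_card_branch [DecidableEq V] [DecidableRel G.Adj] (hG : G.IsTree) (v : V) :
    ∑ u ∈ G.neighborFinset v, #(G.branch v u) = Fintype.card V - 1 := by
  rw [← card_biUnion, hG.biUnion_branch, card_erase_of_mem (mem_univ v), card_univ]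
  intro u₁ h₁ u₂ h₂ hne
  rw [mem_coe, mem_neighborFinset] at h₁ h₂
  exact hG.isAcyclic.disjoint_branch h₁ h₂ hne

/-- Requiring both sides to be odd makes the relation symmetric; in a tree with an even number
of vertices either condition implies the other (`IsTree.odd_card_branch_comm`). -/
def oddBranchGraph (G : SimpleGraph V) : SimpleGraph V where
  Adj v u := G.Adj v u ∧ Odd #(G.branch v u) ∧ Odd #(G.branch u v)
  symm := ⟨fun _ _ h => ⟨h.1.symm, h.2.2, h.2.1⟩⟩
  loopless := ⟨fun _ h => h.1.ne rfl⟩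

theorem oddBranchGraph_adj {v u : V} :
    G.oddBranchGraph.Adj v u ↔ G.Adj v u ∧ Odd #(G.branch v u) ∧ Odd #(G.branch u v) :=
  Iff.rfl

theorem IsTree.odd_card_branch_comm [DecidableEq V] (hG : G.IsTree)
    (heven : Even (Fintype.card V)) {v u : V} (h : G.Adj v u) :
    Odd #(G.branch u v) ↔ Odd #(G.branch v u) := by
  rw [← hG.compl_branch h, card_compl, Nat.odd_sub (card_le_univ _), ← Nat.not_even_iff_odd]
  simp [heven]

theorem IsTree.odd_degree_oddBranchGraph [DecidableEq V] [DecidableRel G.Adj]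
    [DecidableRel G.oddBranchGraph.Adj] (hG : G.IsTree) (heven : Even (Fintype.card V))
    (v : V) : Odd (G.oddBranchGraph.degree v) := by
  have hnbr : G.oddBranchGraph.neighborFinset v =
      {u ∈ G.neighborFinset v | Odd #(G.branch v u)} := by
    ext u
    simp only [mem_neighborFinset, mem_filter, oddBranchGraph_adj]
    exact ⟨fun h => ⟨h.1, h.2.1⟩,
      fun h => ⟨h.1, h.2, (hG.odd_card_branch_comm heven h.1).mpr h.2⟩⟩
  rw [← card_neighborFinset_eq_degree, hnbr, ← odd_sum_iff_odd_card_odd, hG.sum_card_branch]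
  exact Nat.Even.sub_odd (Fintype.card_pos_iff.mpr ⟨v⟩) heven odd_one

end SimpleGraph

theorem stmt12 {V : Type*} [Fintype V] [DecidableEq V] (T : SimpleGraph V) [DecidableRel T.Adj]
    (hT : T.IsTree) (heven : Even (Fintype.card V)) (U : Finset V) (hU : Odd U.card) :
    ∃ f ∈ edgesCut T.edgeFinset U, ∃ Wf : Finset V,
      edgesCut T.edgeFinset Wf = {f} ∧ Odd Wf.card := by
  classical
  obtain ⟨v, hv, u, hu, hvu⟩ := T.oddBranchGraph.exists_adj_notMem_of_odd_degree hU
    fun v _ => hT.odd_degree_oddBranchGraph heven v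
  obtain ⟨h, hodd, -⟩ := SimpleGraph.oddBranchGraph_adj.mp hvu
  refine ⟨s(v, u), ?_, T.branch v u, hT.isAcyclic.edgesCut_branch h, hodd⟩
  exact mem_filter.mpr ⟨SimpleGraph.mem_edgeFinset.mpr h, v, u, rfl, hv, hu⟩
end

section
/- Let G̃ be a finite connected undirected graph with nonnegative edge capacities λ̃ and an even number of vertices, and let T = (V, F, α) be a Gomory–Hu tree for G̃ (for every edge f = (s,t) ∈ F, the two components of T \ f form a minimum-capacity s–t cut in G̃ of value α(f)). Then among the cuts determined by removing a single edge of T, there is one with both sides of odd cardinality whose capacity equals the minimum capacity over all odd cuts of G̃. -/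
open Finset

/-! Let `S` be an odd cut of minimum capacity and `r` a vertex outside `S` (it exists because
`|V|` is even). For a tree edge `f`, let `W_f` be the component of `T \ f` avoiding `r`. The tree
path from `r` to `v` crosses `δ_T(S)` an odd number of times iff `v ∈ S`, and it uses `f` iff
`v ∈ W_f`; summing over `v` gives `|S| ≡ ∑_{f ∈ δ_T(S)} |W_f| (mod 2)`, so some `f ∈ δ_T(S)` has
`|W_f|` odd. As `f` crosses `S`, the Gomory–Hu property gives `c(δ(W_f)) = α(f) ≤ c(δ(S))`. -/

lemma mk_mem_edgesCut_iff {V : Type*} [Fintype V] [DecidableEq V] {E : Finset (Sym2 V)}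
    {S : Finset V} {x y : V} :
    s(x, y) ∈ edgesCut E S ↔ s(x, y) ∈ E ∧ ¬(x ∈ S ↔ y ∈ S) := by
  simp only [edgesCut, mem_filter, Sym2.eq_iff]
  constructor
  · rintro ⟨hE, a, b, (⟨rfl, rfl⟩ | ⟨rfl, rfl⟩), ha, hb⟩ <;> exact ⟨hE, by tauto⟩
  · rintro ⟨hE, h⟩
    by_cases hx : x ∈ S
    · exact ⟨hE, x, y, Or.inl ⟨rfl, rfl⟩, hx, by tauto⟩
    · exact ⟨hE, y, x, Or.inr ⟨rfl, rfl⟩, by tauto, hx⟩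

namespace SimpleGraph

variable {V : Type*} [Fintype V] [DecidableEq V] {G : SimpleGraph V}

lemma Walk.even_countP_mem_edgesCut_iff [DecidableRel G.Adj] (S : Finset V) {x y : V}
    (p : G.Walk x y) :
    Even (p.edges.countP (· ∈ edgesCut G.edgeFinset S)) ↔ (x ∈ S ↔ y ∈ S) := by
  induction p with
  | nil => simp
  | @cons u v w h p ih =>
    have hcut : s(u, v) ∈ edgesCut G.edgeFinset S ↔ ¬(u ∈ S ↔ v ∈ S) := by
      simp [mk_mem_edgesCut_iff, h]
    by_cases huv : u ∈ S ↔ v ∈ S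
    · simp [hcut, huv, ih]
    · simp only [edges_cons, hcut, huv, not_false_eq_true, decide_true, List.countP_cons_of_pos,
        Nat.even_add_one, ih]
      tauto

open Classical in
noncomputable def farSide (G : SimpleGraph V) (r : V) (f : Sym2 V) : Finset V :=
  {v | ¬(G.deleteEdges {f}).Reachable r v}

lemma mem_farSide {r v : V} {f : Sym2 V} :
    v ∈ G.farSide r f ↔ ¬(G.deleteEdges {f}).Reachable r v := by
  simp [farSide]

lemma IsAcyclic.mem_farSide_iff (hG : G.IsAcyclic) {r v : V} {p : G.Walk r v} (hp : p.IsPath)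
    {f : Sym2 V} : v ∈ G.farSide r f ↔ f ∈ p.edges := by
  refine ⟨p.mem_edges_of_not_reachable_deleteEdges ∘ mem_farSide.1, fun hf => ?_⟩
  rw [mem_farSide]
  rintro ⟨q⟩
  let q' := (q.mapLe (deleteEdges_le _)).bypass
  have hpq : p = q' :=
    congrArg Subtype.val ((hG.subsingleton_path r v).elim ⟨p, hp⟩ ⟨q', Walk.bypass_isPath _⟩)
  have hfq : f ∈ q.edges := by
    rw [← Walk.edges_mapLe_eq_edges (deleteEdges_le _) q]
    exact Walk.edges_bypass_subset_edges _ (show f ∈ q'.edges from hpq ▸ hf)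
  simpa using q.edges_subset_edgeSet hfq

lemma edgesCut_farSide [DecidableRel G.Adj] (hG : G.Connected) {f : Sym2 V}
    (hf : f ∈ G.edgeSet) (hb : G.IsBridge f) (r : V) :
    edgesCut G.edgeFinset (G.farSide r f) = {f} := by
  induction f with | h a b => ?_
  ext e
  rw [mem_singleton]
  constructor
  · induction e with | h x y => ?_
    rw [mk_mem_edgesCut_iff, mem_edgeFinset, mem_farSide, mem_farSide, not_iff_not]
    rintro ⟨hxy, hcross⟩
    by_contra hne
    have hadj : (G.deleteEdges {s(a, b)}).Adj x y := by simpa [hne] using hxy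
    exact hcross ⟨fun h => h.trans hadj.reachable, fun h => h.trans hadj.symm.reachable⟩
  · rintro rfl
    rw [mk_mem_edgesCut_iff, mem_edgeFinset, mem_farSide, mem_farSide, not_iff_not]
    refine ⟨hf, fun hab => ?_⟩
    by_cases ha : (G.deleteEdges {s(a, b)}).Reachable r a
    · exact hb (ha.symm.trans (hab.1 ha))
    · obtain ⟨w⟩ := hG.preconnected r a
      exact ha ⟨w.bypass.toDeleteEdge _
        (w.bypass_isPath.isTrail.not_mem_edges_of_not_reachable (mt hab.2 ha) hb)⟩

lemma IsTree.odd_card_filter_mem_farSide_iff [DecidableRel G.Adj] (hG : G.IsTree)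
    {S : Finset V} {r : V} (hr : r ∉ S) (v : V) :
    Odd #{f ∈ edgesCut G.edgeFinset S | v ∈ G.farSide r f} ↔ v ∈ S := by
  obtain ⟨p, hp, -⟩ := hG.existsUnique_path r v
  have hpath : {f ∈ edgesCut G.edgeFinset S | v ∈ G.farSide r f}
      = (p.edges.filter (· ∈ edgesCut G.edgeFinset S)).toFinset := by
    ext f
    simp [hG.isAcyclic.mem_farSide_iff hp, and_comm]
  rw [hpath, List.toFinset_card_of_nodup (hp.edges_nodup.filter _),
    ← List.countP_eq_length_filter, ← Nat.not_even_iff_odd, p.even_countP_mem_edgesCut_iff]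
  simp [hr]

lemma IsTree.exists_odd_card_farSide [DecidableRel G.Adj] (hG : G.IsTree) {S : Finset V}
    (hS : Odd #S) {r : V} (hr : r ∉ S) :
    ∃ f ∈ edgesCut G.edgeFinset S, Odd #(G.farSide r f) := by
  by_contra! h
  have hsum : ∑ v, #{f ∈ edgesCut G.edgeFinset S | v ∈ G.farSide r f}
      = ∑ f ∈ edgesCut G.edgeFinset S, #(G.farSide r f) := by
    simpa [bipartiteAbove, bipartiteBelow] using
      sum_card_bipartiteAbove_eq_sum_card_bipartiteBelow (s := univ)
        (t := edgesCut G.edgeFinset S) (fun v f => v ∈ G.farSide r f)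
  have heven : Even (∑ f ∈ edgesCut G.edgeFinset S, #(G.farSide r f)) :=
    even_sum _ fun f hf => Nat.not_odd_iff_even.1 (h f hf)
  rw [← hsum, even_sum_iff_even_card_odd] at heven
  simp only [hG.odd_card_filter_mem_farSide_iff hr, filter_mem_eq_inter, univ_inter] at heven
  exact Nat.not_even_iff_odd.2 hS heven

end SimpleGraph

theorem stmt13_general {V : Type*} [Fintype V] [DecidableEq V]
    (G : SimpleGraph V) [DecidableRel G.Adj] (c : Sym2 V → ℝ)
    (heven : Even (Fintype.card V))
    (T : SimpleGraph V) [DecidableRel T.Adj] (hT : T.IsTree) (α : Sym2 V → ℝ)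
    (hGH : ∀ f ∈ T.edgeFinset, ∀ Wf : Finset V, edgesCut T.edgeFinset Wf = {f} →
      wSum c (edgesCut G.edgeFinset Wf) = α f ∧
      ∀ S : Finset V, (∃ a b : V, f = s(a, b) ∧ a ∈ S ∧ b ∉ S) →
        α f ≤ wSum c (edgesCut G.edgeFinset S)) :
    ∃ f ∈ T.edgeFinset, ∃ Wf : Finset V,
      edgesCut T.edgeFinset Wf = {f} ∧ Odd Wf.card ∧ Odd Wfᶜ.card ∧
      ∀ S : Finset V, Odd S.card →
        wSum c (edgesCut G.edgeFinset Wf) ≤ wSum c (edgesCut G.edgeFinset S) := by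
  obtain ⟨v₀⟩ := hT.connected.nonempty
  obtain ⟨S, hSodd, hSmin⟩ := exists_min_image {S : Finset V | Odd #S}
      (fun S => wSum c (edgesCut G.edgeFinset S)) ⟨{v₀}, by simp⟩
  rw [mem_filter] at hSodd
  obtain ⟨r, hr⟩ : ∃ r, r ∉ S := by
    by_contra! h
    rw [eq_univ_of_forall h, card_univ] at hSodd
    exact Nat.not_odd_iff_even.2 heven hSodd.2
  obtain ⟨f, hfS, hWodd⟩ := hT.exists_odd_card_farSide hSodd.2 hr
  have hfT : f ∈ T.edgeFinset := (mem_filter.1 hfS).1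
  have hfE : f ∈ T.edgeSet := SimpleGraph.mem_edgeFinset.1 hfT
  have hcut := T.edgesCut_farSide hT.connected hfE
    (SimpleGraph.isAcyclic_iff_forall_isBridge.1 hT.isAcyclic hfE) r
  obtain ⟨hα, hαmin⟩ := hGH f hfT _ hcut
  refine ⟨f, hfT, _, hcut, hWodd, ?_, fun S' hS' => ?_⟩
  · rw [card_compl]
    exact Nat.Even.sub_odd (card_le_univ _) heven hWodd
  · rw [hα]
    exact (hαmin S (mem_filter.1 hfS).2).trans (hSmin S' (by simpa using hS'))

theorem stmt13 {V : Type*} [Fintype V] [DecidableEq V]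
    (G : SimpleGraph V) [DecidableRel G.Adj] (hconn : G.Connected)
    (c : Sym2 V → ℝ) (hc : ∀ e ∈ G.edgeFinset, 0 ≤ c e)
    (heven : Even (Fintype.card V))
    (T : SimpleGraph V) [DecidableRel T.Adj] (hT : T.IsTree) (α : Sym2 V → ℝ)
    (hGH : ∀ f ∈ T.edgeFinset, ∀ Wf : Finset V, edgesCut T.edgeFinset Wf = {f} →
      wSum c (edgesCut G.edgeFinset Wf) = α f ∧
      ∀ S : Finset V, (∃ a b : V, f = s(a, b) ∧ a ∈ S ∧ b ∉ S) →
        α f ≤ wSum c (edgesCut G.edgeFinset S)) :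
    ∃ f ∈ T.edgeFinset, ∃ Wf : Finset V,
      edgesCut T.edgeFinset Wf = {f} ∧ Odd Wf.card ∧ Odd Wfᶜ.card ∧
      ∀ S : Finset V, Odd S.card →
        wSum c (edgesCut G.edgeFinset Wf) ≤ wSum c (edgesCut G.edgeFinset S) :=
  stmt13_general G c heven T hT α hGH
end
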